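/- The map Φ_a(z) = (z-1) + a²/(z-1) + 1 + a² maps H \ A_a into the open upper half plane H, where A_a = {z ∈ H̄ : |z-1| ≤ a}. -/

import Mathlib

theorem phi_mapsTo (a : ℝ) (ha : 0 < a) (ha1 : a < 1) :
    Set.MapsTo (fun z : ℂ => (z - 1) + (a : ℂ)^2 / (z - 1) + 1 + (a : ℂ)^2)
      ({z : ℂ | 0 < z.im} \ {z : ℂ | 0 ≤ z.im ∧ ‖z - 1‖ ≤ a})
      {z : ℂ | 0 < z.im} := by
  rintro z ⟨hz, hz2⟩
  simp only [Set.mem_setOf_eq] at hz hz2 ⊢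
  push_neg at hz2
  have habs : a < ‖z - 1‖ := hz2 hz.le
  set w : ℂ := z - 1 with hw
  have hwim : 0 < w.im := by simpa [hw] using hz
  have hns : a ^ 2 < Complex.normSq w := by
    have := Complex.sq_norm w
    nlinarith [norm_nonneg w]
  have hnspos : 0 < Complex.normSq w := lt_trans (by positivity) hns
  have hdiv : ((a : ℂ) ^ 2 / w).im = a ^ 2 * (-w.im / Complex.normSq w) := by
    rw [div_eq_mul_inv]
    simp [Complex.inv_im, Complex.mul_im, ← Complex.ofReal_pow, Complex.ofReal_re, Complex.ofReal_im]
  have : ((z - 1) + (a : ℂ)^2 / (z - 1) + 1 + (a : ℂ)^2).im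
      = w.im + a ^ 2 * (-w.im / Complex.normSq w) := by
    have him : ((a:ℂ)^2).im = 0 := by simp [← Complex.ofReal_pow]
    simp [Complex.add_im, hdiv, hw, him]
    simpa [hw] using hdiv
  rw [this]
  rw [mul_div_assoc'] at *
  have key : a ^ 2 * -w.im / Complex.normSq w > -w.im := by
    rw [gt_iff_lt, lt_div_iff₀ hnspos]
    nlinarith
  linarith
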